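/- Let X ⊆ R^n be a convex set and f : X → R a radially lower semicontinuous function which is pseudoconvex with respect to the lower Dini derivative. Then f is strictly pseudoconvex if and only if f is radially nonconstant, i.e., there is no nondegenerate line segment in X on which f is constant. -/

import Mathlib

open Filter Set

/-- Lower Dini directional derivative of a function of one real variable. -/
noncomputable def dini (φ : ℝ → ℝ) (s u : ℝ) : ℝ :=
  liminf (fun h : ℝ => (φ (s + h * u) - φ s) / h) (nhdsWithin 0 (Ioi 0))

/-- Pseudoconvexity w.r.t. the lower Dini derivative, one variable. -/
def PseudoconvexOn (φ : ℝ → ℝ) (I : Set ℝ) : Prop :=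
  ∀ s ∈ I, ∀ t ∈ I, φ t < φ s → dini φ s (t - s) < 0

/-- A direction `u` is admissible at `s` relative to `I`. -/
def Admissible (I : Set ℝ) (s u : ℝ) : Prop :=
  ∃ δ > 0, ∀ h ∈ Ioo (0:ℝ) δ, s + h * u ∈ I

/-- `s` is a stationary point of `φ` relative to `I`. -/
def Stationary (φ : ℝ → ℝ) (I : Set ℝ) (s : ℝ) : Prop :=
  ∀ u : ℝ, Admissible I s u → 0 ≤ dini φ s u

/-- Lower Dini directional derivative of `f : ℝⁿ → ℝ` at `x` in direction `u`. -/
noncomputable def diniV {n : ℕ} (f : (Fin n → ℝ) → ℝ) (x u : Fin n → ℝ) : ℝ :=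
  liminf (fun h : ℝ => (f (x + h • u) - f x) / h) (nhdsWithin 0 (Ioi 0))

/-- Pseudoconvexity of `f` on `X ⊆ ℝⁿ` w.r.t. the lower Dini derivative. -/
def PseudoconvexOnV {n : ℕ} (f : (Fin n → ℝ) → ℝ) (X : Set (Fin n → ℝ)) : Prop :=
  ∀ x ∈ X, ∀ y ∈ X, f y < f x → diniV f x (y - x) < 0

/-- A direction `u` is admissible at `x` relative to `X`. -/
def AdmissibleV {n : ℕ} (X : Set (Fin n → ℝ)) (x u : Fin n → ℝ) : Prop :=
  ∃ δ > 0, ∀ h ∈ Ioo (0:ℝ) δ, x + h • u ∈ X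

/-- `x` is a stationary point of `f` relative to `X`. -/
def StationaryV {n : ℕ} (f : (Fin n → ℝ) → ℝ) (X : Set (Fin n → ℝ)) (x : Fin n → ℝ) : Prop :=
  ∀ u : Fin n → ℝ, AdmissibleV X x u → 0 ≤ diniV f x u

/-- `f` is radially lower semicontinuous on `X`: lsc on every segment. -/
def RadiallyLSC {n : ℕ} (f : (Fin n → ℝ) → ℝ) (X : Set (Fin n → ℝ)) : Prop :=
  ∀ x ∈ X, ∀ y ∈ X,
    LowerSemicontinuousOn (fun t : ℝ => f (x + t • (y - x))) (Icc 0 1)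

/-- `f` is radially upper semicontinuous on `X`: usc on every segment. -/
def RadiallyUSC {n : ℕ} (f : (Fin n → ℝ) → ℝ) (X : Set (Fin n → ℝ)) : Prop :=
  ∀ x ∈ X, ∀ y ∈ X,
    UpperSemicontinuousOn (fun t : ℝ => f (x + t • (y - x))) (Icc 0 1)

/-- `f` is quasiconvex on `X`. -/
def QuasiconvexOnSeg {n : ℕ} (f : (Fin n → ℝ) → ℝ) (X : Set (Fin n → ℝ)) : Prop :=
  ∀ x ∈ X, ∀ y ∈ X, ∀ t ∈ Icc (0:ℝ) 1, f (x + t • (y - x)) ≤ max (f x) (f y)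

/-- `f` is semistrictly quasiconvex on `X`. -/
def SemistrictlyQuasiconvexOn {n : ℕ} (f : (Fin n → ℝ) → ℝ) (X : Set (Fin n → ℝ)) : Prop :=
  ∀ x ∈ X, ∀ y ∈ X, f y < f x → ∀ t ∈ Ioo (0:ℝ) 1, f (x + t • (y - x)) < f x

/-- Strict pseudoconvexity of `f` on `X` w.r.t. the lower Dini derivative. -/
def StrictPseudoconvexOnV {n : ℕ} (f : (Fin n → ℝ) → ℝ) (X : Set (Fin n → ℝ)) : Prop :=
  ∀ x ∈ X, ∀ y ∈ X, x ≠ y → f y ≤ f x → diniV f x (y - x) < 0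

/-!
Restricted to a segment `t ↦ f (x + t • (y - x))`, everything becomes one-dimensional. Suppose
`φ` is pseudoconvex and lower semicontinuous on `[0, 1]`, `φ 1 = φ 0`, and `φ` is not constant.
If `φ` dips below `φ 0` somewhere in `(0, 1)`, pseudoconvexity at `0` gives `dini φ 0 1 < 0`.
Otherwise `φ > φ 0 = φ 1` on a small interval `[a, b]`; at a minimiser of `φ` on `[a, b]`
pseudoconvexity makes `φ` decrease in both directions, which is absurd.
-/

open Topology

-- No boundedness is needed: the junk value `0` of an unbounded `sSup` is scaled to `0` as well.
theorem Real.liminf_const_mul_of_pos {ι : Type*} {l : Filter ι} {u : ι → ℝ} {c : ℝ}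
    (hc : 0 < c) : liminf (fun i => c * u i) l = c * liminf u l := by
  simp only [liminf_eq]
  rw [← smul_eq_mul, ← Real.sSup_smul_of_nonneg hc.le]
  congr 1
  ext a
  simp only [mem_smul_set_iff_inv_smul_mem₀ hc.ne', mem_ofPred_eq, smul_eq_mul,
    inv_mul_le_iff₀ hc]

theorem map_mul_left_nhdsGT_zero {c : ℝ} (hc : 0 < c) : map (c * ·) (𝓝[>] 0) = 𝓝[>] 0 := by
  simpa only [comap_mulLeft_nhdsGT_zero hc] using
    map_comap_of_surjective (mul_left_surjective₀ hc.ne') (𝓝[>] (0 : ℝ))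

section OneVariable

variable {φ : ℝ → ℝ} {s u : ℝ}

theorem dini_const_mul {c : ℝ} (hc : 0 < c) : dini φ s (c * u) = c * dini φ s u := by
  have hquot : (fun h => (φ (s + h * (c * u)) - φ s) / h) =
      fun h => c * ((φ (s + (c * h) * u) - φ s) / (c * h)) := by
    funext h
    rw [mul_div_assoc', mul_div_mul_left _ _ hc.ne', mul_left_comm, mul_assoc]
  rw [dini, hquot, Real.liminf_const_mul_of_pos hc, dini]
  conv_rhs => rw [← map_mul_left_nhdsGT_zero hc]
  rfl

theorem dini_neg_iff_of_pos {c : ℝ} (hc : 0 < c) : dini φ s (c * u) < 0 ↔ dini φ s u < 0 := by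
  rw [dini_const_mul hc, mul_neg_iff, or_iff_left (fun h => h.1.not_gt hc)]
  exact and_iff_right hc

theorem dini_eq_zero_of_eventually_eq (h : ∀ᶠ h in 𝓝[>] 0, φ (s + h * u) = φ s) :
    dini φ s u = 0 := by
  rw [dini, liminf_congr (h.mono fun h hh => by rw [hh, sub_self, zero_div]), liminf_const]

theorem frequently_lt_of_dini_neg (h : dini φ s u < 0) :
    ∃ᶠ h in 𝓝[>] 0, φ (s + h * u) < φ s := by
  have hcobdd : IsCoboundedUnder (· ≥ ·) (𝓝[>] 0) fun h => (φ (s + h * u) - φ s) / h := by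
    by_contra hcobdd
    rw [dini, Real.liminf_of_not_isCoboundedUnder hcobdd] at h
    exact lt_irrefl 0 h
  refine (frequently_lt_of_liminf_lt hcobdd h).mp ?_
  filter_upwards [self_mem_nhdsWithin] with h (hh : 0 < h) hquot
  exact sub_neg.mp ((div_neg_iff.mp hquot).resolve_left fun h' => h'.2.not_gt hh).1

theorem IsMinOn.stationary {I : Set ℝ} (hmin : IsMinOn φ I s) : Stationary φ I s := by
  rintro u ⟨δ, hδ, hI⟩
  by_contra! hneg
  obtain ⟨h, hlt, hh⟩ :=
    ((frequently_lt_of_dini_neg hneg).and_eventually (Ioo_mem_nhdsGT hδ)).exists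
  exact (isMinOn_iff.mp hmin _ (hI h hh)).not_gt hlt

theorem LowerSemicontinuousOn.exists_dini_nonneg {a b : ℝ} (hab : a < b)
    (hlsc : LowerSemicontinuousOn φ (Icc a b)) :
    ∃ s ∈ Icc a b, 0 ≤ dini φ s 1 ∨ 0 ≤ dini φ s (-1) := by
  obtain ⟨s, hs, hmin⟩ := hlsc.exists_isMinOn (nonempty_Icc.mpr hab.le) isCompact_Icc
  refine ⟨s, hs, ?_⟩
  rcases hs.2.lt_or_eq with hsb | rfl
  · refine .inl (hmin.stationary 1 ⟨b - s, sub_pos.mpr hsb, fun h hh => ⟨?_, ?_⟩⟩) <;>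
      linarith [hs.1, hh.1, hh.2]
  · refine .inr (hmin.stationary (-1) ⟨s - a, sub_pos.mpr hab, fun h hh => ⟨?_, ?_⟩⟩) <;>
      linarith [hh.1, hh.2]

theorem LowerSemicontinuousOn.exists_Icc_lt {I : Set ℝ} (hlsc : LowerSemicontinuousOn φ I)
    (hI : I ∈ 𝓝 s) {c : ℝ} (hc : c < φ s) :
    ∃ a b, a < b ∧ Icc a b ⊆ I ∧ ∀ t ∈ Icc a b, c < φ t := by
  have hev : ∀ᶠ t in 𝓝 s, c < φ t ∧ t ∈ I := by
    refine (?_ : ∀ᶠ t in 𝓝 s, c < φ t).and hI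
    simpa only [nhdsWithin_eq_nhds.mpr hI] using hlsc s (mem_of_mem_nhds hI) c hc
  obtain ⟨l, r, hs, hsub⟩ := mem_nhds_iff_exists_Ioo_subset.mp hev
  have hIcc : Icc ((l + s) / 2) ((s + r) / 2) ⊆ Ioo l r :=
    Icc_subset_Ioo (by linarith [hs.1]) (by linarith [hs.2])
  exact ⟨_, _, by linarith [hs.1, hs.2], fun t ht => (hsub (hIcc ht)).2,
    fun t ht => (hsub (hIcc ht)).1⟩

theorem PseudoconvexOn.dini_one_neg (hpc : PseudoconvexOn φ (Icc 0 1)) {t : ℝ}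
    (ht : t ∈ Ioo 0 1) (hlt : φ 1 < φ t) : dini φ t 1 < 0 := by
  have h := hpc t (Ioo_subset_Icc_self ht) 1 (right_mem_Icc.mpr zero_le_one) hlt
  rwa [← mul_one (1 - t), dini_neg_iff_of_pos (sub_pos.mpr ht.2)] at h

theorem PseudoconvexOn.dini_neg_one_neg (hpc : PseudoconvexOn φ (Icc 0 1)) {t : ℝ}
    (ht : t ∈ Ioo 0 1) (hlt : φ 0 < φ t) : dini φ t (-1) < 0 := by
  have h := hpc t (Ioo_subset_Icc_self ht) 0 (left_mem_Icc.mpr zero_le_one) hlt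
  rwa [zero_sub, ← mul_neg_one, dini_neg_iff_of_pos ht.1] at h

theorem PseudoconvexOn.dini_zero_one_neg (hpc : PseudoconvexOn φ (Icc 0 1))
    (hlsc : LowerSemicontinuousOn φ (Icc 0 1)) (hφ : φ 1 = φ 0)
    (hne : ∃ t ∈ Icc 0 1, φ t ≠ φ 0) : dini φ 0 1 < 0 := by
  by_cases hdip : ∃ t ∈ Ioo 0 1, φ t < φ 0
  · obtain ⟨t, ht, hlt⟩ := hdip
    have h := hpc 0 (left_mem_Icc.mpr zero_le_one) t (Ioo_subset_Icc_self ht) hlt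
    rwa [sub_zero, ← mul_one t, dini_neg_iff_of_pos ht.1] at h
  push Not at hdip
  obtain ⟨t, ht, hne⟩ := hne
  have ht' : t ∈ Ioo 0 1 := by
    refine ⟨ht.1.lt_of_ne ?_, ht.2.lt_of_ne ?_⟩ <;> rintro rfl <;> simp_all
  obtain ⟨a, b, hab, hsub, hlt⟩ := (hlsc.mono Ioo_subset_Icc_self).exists_Icc_lt
    (Ioo_mem_nhds ht'.1 ht'.2) ((hdip t ht').lt_of_ne' hne)
  obtain ⟨s, hs, hdini⟩ := (hlsc.mono (hsub.trans Ioo_subset_Icc_self)).exists_dini_nonneg hab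
  rcases hdini with hdini | hdini
  · exact absurd (hpc.dini_one_neg (hsub hs) (hφ ▸ hlt s hs)) hdini.not_gt
  · exact absurd (hpc.dini_neg_one_neg (hsub hs) (hlt s hs)) hdini.not_gt

end OneVariable

section Segments

variable {n : ℕ} {f : (Fin n → ℝ) → ℝ} {X : Set (Fin n → ℝ)} {x y : Fin n → ℝ}

theorem dini_comp_line (v : Fin n → ℝ) (s u : ℝ) :
    dini (fun t => f (x + t • v)) s u = diniV f (x + s • v) (u • v) := by
  simp only [dini, diniV, add_smul, mul_smul, add_assoc]

theorem diniV_sub_eq_dini_comp_line :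
    diniV f x (y - x) = dini (fun t => f (x + t • (y - x))) 0 1 := by
  rw [dini_comp_line, zero_smul, add_zero, one_smul]

theorem PseudoconvexOnV.comp_line (hpc : PseudoconvexOnV f X) (hX : Convex ℝ X) (hx : x ∈ X)
    (hy : y ∈ X) : PseudoconvexOn (fun t => f (x + t • (y - x))) (Icc 0 1) := by
  intro s hs t ht hlt
  rw [dini_comp_line, show (t - s) • (y - x) = x + t • (y - x) - (x + s • (y - x)) by module]
  exact hpc _ (hX.add_smul_sub_mem hx hy hs) _ (hX.add_smul_sub_mem hx hy ht) hlt

end Segments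

theorem stmt14 {n : ℕ} (X : Set (Fin n → ℝ)) (hX : Convex ℝ X)
    (f : (Fin n → ℝ) → ℝ) (hlsc : RadiallyLSC f X) (hpc : PseudoconvexOnV f X) :
    StrictPseudoconvexOnV f X ↔
      ¬ ∃ x ∈ X, ∃ y ∈ X, x ≠ y ∧ ∀ t ∈ Icc (0:ℝ) 1, f (x + t • (y - x)) = f x := by
  constructor
  · rintro hspc ⟨x, hx, y, hy, hxy, hconst⟩
    have hfy : f y ≤ f x := by simpa using (hconst 1 (right_mem_Icc.mpr zero_le_one)).le
    have hzero : diniV f x (y - x) = 0 := by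
      rw [diniV_sub_eq_dini_comp_line]
      refine dini_eq_zero_of_eventually_eq ?_
      filter_upwards [Ioo_mem_nhdsGT one_pos] with h hh
      simpa using hconst h (Ioo_subset_Icc_self (by simpa using hh))
    exact (hspc x hx y hy hxy hfy).ne hzero
  · intro hnc x hx y hy hxy hle
    rcases hle.lt_or_eq with hlt | heq
    · exact hpc x hx y hy hlt
    rw [diniV_sub_eq_dini_comp_line]
    refine (hpc.comp_line hX hx hy).dini_zero_one_neg (hlsc x hx y hy) (by simpa using heq) ?_
    by_contra! hconst
    exact hnc ⟨x, hx, y, hy, hxy, by simpa using hconst⟩
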